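/- The map f_DC : P^sp_D(2n) → P^ms_C(2n), d ↦ ((d⁺)⁻)_C, is order-preserving: if d, d' ∈ P^sp_D(2n) satisfy d ⪯ d' in the dominance order, then f_DC(d) ⪯ f_DC(d'). -/

import Mathlib

/-- A partition of `N`: a non-increasing list of positive naturals summing to `N`. -/
def IsPartition (N : ℕ) (l : List ℕ) : Prop :=
  l.Pairwise (· ≥ ·) ∧ (∀ p ∈ l, 0 < p) ∧ l.sum = N

/-- Dominance order on partitions: `Dom p q` means `p ⪯ q`,
i.e. every initial partial sum of `p` is at most that of `q`. -/
def Dom (p q : List ℕ) : Prop :=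
  ∀ j : ℕ, (p.take j).sum ≤ (q.take j).sum

/-- The height `h_d(s) = #{j : d_j ≥ s}`. -/
def height (l : List ℕ) (s : ℕ) : ℕ :=
  (l.filter (fun p => decide (s ≤ p))).length

/-- Membership in `P_ε(N)`: every part congruent to `ε` mod 2 occurs with even multiplicity. -/
def PEps (e : ℕ) (l : List ℕ) : Prop :=
  ∀ s ∈ l, s % 2 = e % 2 → Even (l.count s)

/-- Membership in `P_{ε,ε'}(N)`: lies in `P_ε` and `h_d(s) ≡ ε'  (mod 2)` for every integer
`s ≥ 0` with `s ≡ ε (mod 2)` which is either `0` or a part of `d`. -/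
def PEpsEps (e e' : ℕ) (l : List ℕ) : Prop :=
  PEps e l ∧
    ∀ s : ℕ, s % 2 = e % 2 → (s = 0 ∨ s ∈ l) → height l s % 2 = e' % 2

/-- `d⁺ = [d₁ + 1, d₂, …, d_k]`. -/
def dplus : List ℕ → List ℕ
  | [] => []
  | a :: rest => (a + 1) :: rest

/-- `d⁻ = [d₁, …, d_{k−1}, d_k − 1]`, the last entry removed if `d_k = 1`. -/
def dminus (l : List ℕ) : List ℕ :=
  (l.dropLast ++ [l.getLastD 0 - 1]).filter (fun p => decide (0 < p))

/-- `IsCollapse e N l c` says that `c` is the collapse of `l` into `P_e`: the greatest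
element, in the dominance order, of the set of partitions of `N` lying in `P_e` and
dominated by `l`. -/
def IsCollapse (e N : ℕ) (l c : List ℕ) : Prop :=
  IsPartition N c ∧ PEps e c ∧ Dom c l ∧
    ∀ m : List ℕ, IsPartition N m → PEps e m → Dom m l → Dom m c

/-!
For a nonempty partition `d` of `N`, the `j`-th partial sum of `(d⁺)⁻` is
`min (d₁ + ⋯ + d_j + 1) N` for `j ≥ 1`: adding a box to the first row and removing one from
the last only shifts the partial sums by one and caps them at `N`. Hence `d ↦ (d⁺)⁻` is
monotone for dominance. A collapse is monotone as well, being the greatest element of a set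
that only grows with its argument.
-/

theorem Dom.trans {p q r : List ℕ} (hpq : Dom p q) (hqr : Dom q r) : Dom p r :=
  fun j => (hpq j).trans (hqr j)

theorem IsCollapse.dom_of_dom {ε N : ℕ} {l l' c c' : List ℕ} (hc : IsCollapse ε N l c)
    (hc' : IsCollapse ε N l' c') (hll' : Dom l l') : Dom c c' :=
  hc'.2.2.2 c hc.1 hc.2.1 (hc.2.2.1.trans hll')

theorem IsPartition.eq_nil_iff {N : ℕ} {l : List ℕ} (hl : IsPartition N l) :
    l = [] ↔ N = 0 := by
  rw [← hl.2.2, List.sum_eq_zero_iff]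
  refine ⟨fun h => by simp [h], fun h => List.eq_nil_iff_forall_not_mem.mpr fun p hp => ?_⟩
  exact (hl.2.1 p hp).ne' (h p hp)

theorem sum_take_le_sum (l : List ℕ) (j : ℕ) : (l.take j).sum ≤ l.sum :=
  (List.take_sublist j l).sum_le_sum fun _ _ => Nat.zero_le _

theorem dminus_concat {m : List ℕ} (hm : ∀ p ∈ m, 0 < p) (b : ℕ) :
    dminus (m ++ [b]) = m ++ [b - 1].filter (fun p => decide (0 < p)) := by
  rw [dminus, List.dropLast_concat, List.getLastD_concat, List.filter_append,
    List.filter_eq_self.mpr fun p hp => by simpa using hm p hp]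

theorem sum_take_dminus_concat {m : List ℕ} (hm : ∀ p ∈ m, 0 < p) (b j : ℕ) :
    ((dminus (m ++ [b])).take j).sum =
      if j ≤ m.length then (m.take j).sum else m.sum + (b - 1) := by
  rw [dminus_concat hm, List.take_append, List.sum_append]
  split_ifs with hj
  · simp [Nat.sub_eq_zero_of_le hj]
  · rw [List.take_of_length_le (by omega),
      List.take_of_length_le (by grind [List.length_filter_le, List.length_singleton])]
    rcases Nat.eq_zero_or_pos (b - 1) with hb | hb <;> simp [hb]

theorem sum_take_dminus {l : List ℕ} (hl : l ≠ []) (hpos : ∀ p ∈ l, 0 < p) (j : ℕ) :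
    ((dminus l).take j).sum = min (l.take j).sum (l.sum - 1) := by
  obtain ⟨m, b, rfl⟩ : ∃ m b, l = m ++ [b] :=
    ⟨l.dropLast, l.getLast hl, (List.dropLast_append_getLast hl).symm⟩
  have hb : 0 < b := hpos b (by simp)
  rw [sum_take_dminus_concat (fun p hp => hpos p (by simp [hp])), List.take_append,
    List.sum_append, List.sum_append]
  have := sum_take_le_sum m j
  split_ifs with hj
  · simp only [Nat.sub_eq_zero_of_le hj, List.take_zero, List.sum_nil, List.sum_singleton,
      add_zero]
    omega
  · rw [List.take_of_length_le (by omega), List.take_of_length_le (by simp; omega),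
      List.sum_singleton]
    omega

theorem sum_take_dplus_cons (a : ℕ) (t : List ℕ) (j : ℕ) :
    ((dplus (a :: t)).take j).sum = ((a :: t).take j).sum + min j 1 := by
  cases j <;> simp only [dplus, List.take_zero, List.take_succ_cons, List.sum_nil, List.sum_cons]
    <;> omega

theorem IsPartition.sum_take_dminus_dplus {N : ℕ} {d : List ℕ} (hd : IsPartition N d)
    (hne : d ≠ []) (j : ℕ) :
    ((dminus (dplus d)).take j).sum = min ((d.take j).sum + min j 1) N := by
  obtain ⟨a, t, rfl⟩ : ∃ a t, d = a :: t := List.exists_cons_of_ne_nil hne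
  have hpos : ∀ p ∈ dplus (a :: t), 0 < p := by
    simp only [dplus, List.mem_cons, forall_eq_or_imp]
    exact ⟨Nat.succ_pos a, fun p hp => hd.2.1 p (by simp [hp])⟩
  have hsum : (dplus (a :: t)).sum = N + 1 := by
    simp only [dplus, List.sum_cons, ← hd.2.2]
    omega
  rw [sum_take_dminus (by simp [dplus]) hpos, sum_take_dplus_cons, hsum]
  omega

theorem Dom.dminus_dplus {N : ℕ} {d d' : List ℕ} (hd : IsPartition N d)
    (hd' : IsPartition N d') (hdd' : Dom d d') :
    Dom (dminus (dplus d)) (dminus (dplus d')) := by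
  rcases Nat.eq_zero_or_pos N with hN | hN
  · rw [hd.eq_nil_iff.mpr hN, hd'.eq_nil_iff.mpr hN]
    exact fun _ => le_rfl
  intro j
  rw [hd.sum_take_dminus_dplus (mt hd.eq_nil_iff.mp hN.ne'),
    hd'.sum_take_dminus_dplus (mt hd'.eq_nil_iff.mp hN.ne')]
  have := hdd' j
  omega

theorem fDC_monotone_general (n : ℕ) (d d' : List ℕ)
    (hd : IsPartition (2 * n) d) (hd' : IsPartition (2 * n) d')
    (hdom : Dom d d')
    (e e' : List ℕ)
    (he : IsCollapse 1 (2 * n) (dminus (dplus d)) e)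
    (he' : IsCollapse 1 (2 * n) (dminus (dplus d')) e') :
    Dom e e' :=
  he.dom_of_dom he' (hdom.dminus_dplus hd hd')

/-- The map `f_DC : P^sp_D(2n) → P^ms_C(2n)`, `d ↦ ((d⁺)⁻)_C`, is order-preserving for the
dominance order. -/
theorem fDC_monotone (n : ℕ) (d d' : List ℕ)
    (hd : IsPartition (2 * n) d) (hd' : IsPartition (2 * n) d')
    (hdD : PEpsEps 0 0 d) (hd'D : PEpsEps 0 0 d')
    (hdom : Dom d d')
    (e e' : List ℕ)
    (he : IsCollapse 1 (2 * n) (dminus (dplus d)) e)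
    (he' : IsCollapse 1 (2 * n) (dminus (dplus d')) e') :
    Dom e e' :=
  fDC_monotone_general n d d' hd hd' hdom e e' he he'
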